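/- Suppose M ⊆ {0,1,2,3}^{k} is a 2-fold MDS code in H(k,4) (every line in any coordinate direction meets M in exactly 2 points), and define M' ⊆ {0,1,2,3}^{k+1} by M' = M|0 ∪ M|1 ∪ M̄|2 ∪ M̄|3, where M̄ is the complement of M in {0,1,2,3}^k and X|s appends symbol s. Then M' is a 2-fold MDS code in H(k+1,4). -/
import Mathlib

lemma snoc_inj {k : ℕ} (s : Fin 4) :
    Function.Injective (fun w : Fin k → Fin 4 => (Fin.snoc w s : Fin (k+1) → Fin 4)) := by
  intro a b h
  have := congrArg Fin.init h
  simpa using this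

lemma line_card {k : ℕ} (x : Fin k → Fin 4) (i : Fin k) :
    (Finset.univ.filter (fun w : Fin k → Fin 4 => ∀ j, j ≠ i → w j = x j)).card = 4 := by
  have he : (Finset.univ.filter (fun w : Fin k → Fin 4 => ∀ j, j ≠ i → w j = x j))
      = (Finset.univ : Finset (Fin 4)).image (fun a => Function.update x i a) := by
    ext w
    simp only [Finset.mem_filter, Finset.mem_univ, true_and, Finset.mem_image]
    constructor
    · intro h
      refine ⟨w i, funext fun j => ?_⟩
      by_cases hj : j = i
      · subst hj; simp
      · simp [Function.update_of_ne hj, h j hj]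
    · rintro ⟨a, rfl⟩ j hj
      simp [Function.update_of_ne hj]
  rw [he, Finset.card_image_of_injective]
  · simp
  · intro a b h
    have := congrFun h i
    simpa using this

lemma compl_filter_card {k : ℕ} (M : Finset (Fin k → Fin 4)) (x : Fin k → Fin 4) (i : Fin k)
    (h2 : (M.filter (fun w => ∀ j, j ≠ i → w j = x j)).card = 2) :
    (Mᶜ.filter (fun w => ∀ j, j ≠ i → w j = x j)).card = 2 := by
  have hsub : M.filter (fun w => ∀ j, j ≠ i → w j = x j)
      ⊆ Finset.univ.filter (fun w => ∀ j, j ≠ i → w j = x j) :=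
    Finset.filter_subset_filter _ (Finset.subset_univ _)
  have he : Mᶜ.filter (fun w => ∀ j, j ≠ i → w j = x j)
      = Finset.univ.filter (fun w => ∀ j, j ≠ i → w j = x j)
        \ M.filter (fun w => ∀ j, j ≠ i → w j = x j) := by
    ext w; simp [Finset.mem_sdiff]; tauto
  rw [he, Finset.card_sdiff_of_subset hsub, line_card, h2]

lemma pred_snoc {k : ℕ} (x : Fin (k+1) → Fin 4) (i : Fin k) (w : Fin k → Fin 4) (s : Fin 4) :
    (∀ j, j ≠ Fin.castSucc i → (Fin.snoc w s : Fin (k+1) → Fin 4) j = x j) ↔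
      (s = x (Fin.last k) ∧ ∀ j, j ≠ i → w j = x (Fin.castSucc j)) := by
  constructor
  · intro h
    refine ⟨?_, ?_⟩
    · have := h (Fin.last k) (Fin.castSucc_lt_last i).ne'
      simpa using this
    · intro j hj
      have := h (Fin.castSucc j) (by simpa [Fin.castSucc_inj] using hj)
      simpa using this
  · rintro ⟨hs, h⟩ j hj
    induction j using Fin.lastCases with
    | last => simpa using hs
    | cast j =>
      have hji : j ≠ i := by
        intro hji; exact hj (by rw [hji])
      simpa using h j hji

lemma pred_snoc_last {k : ℕ} (x : Fin (k+1) → Fin 4) (w : Fin k → Fin 4) (s : Fin 4) :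
    (∀ j, j ≠ Fin.last k → (Fin.snoc w s : Fin (k+1) → Fin 4) j = x j) ↔ w = Fin.init x := by
  constructor
  · intro h; funext j
    have := h (Fin.castSucc j) (Fin.castSucc_lt_last j).ne
    simpa [Fin.init] using this
  · rintro rfl j hj
    induction j using Fin.lastCases with
    | last => exact absurd rfl hj
    | cast j => simp [Fin.init]

lemma snoc_pair_card {k : ℕ} (c : Fin k → Fin 4) (s t : Fin 4) (hst : s ≠ t) :
    (({Fin.snoc c s} ∪ {Fin.snoc c t} : Finset (Fin (k+1) → Fin 4))).card = 2 := by
  have hne : (Fin.snoc c s : Fin (k+1) → Fin 4) ≠ Fin.snoc c t := fun h =>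
    hst (by simpa using congrFun h (Fin.last k))
  rw [Finset.card_union_of_disjoint (Finset.disjoint_singleton.2 hne)]
  simp

theorem stmt_17 (k : ℕ) (M : Finset (Fin k → Fin 4))
    (hM : ∀ x : Fin k → Fin 4, ∀ i : Fin k,
      (M.filter (fun w => ∀ j, j ≠ i → w j = x j)).card = 2) :
    let M' : Finset (Fin (k + 1) → Fin 4) :=
      M.image (fun w => Fin.snoc w (0 : Fin 4)) ∪ M.image (fun w => Fin.snoc w (1 : Fin 4)) ∪
      Mᶜ.image (fun w => Fin.snoc w (2 : Fin 4)) ∪ Mᶜ.image (fun w => Fin.snoc w (3 : Fin 4));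
    ∀ x : Fin (k + 1) → Fin 4, ∀ i : Fin (k + 1),
      (M'.filter (fun w => ∀ j, j ≠ i → w j = x j)).card = 2 := by
  intro M' x i
  induction i using Fin.lastCases with
  | last =>
    have key : ∀ (A : Finset (Fin k → Fin 4)) (s : Fin 4),
        ((A.image (fun w => Fin.snoc w s)).filter
          (fun w => ∀ j, j ≠ Fin.last k → w j = x j))
        = if Fin.init x ∈ A then {Fin.snoc (Fin.init x) s} else ∅ := by
      intro A s
      rw [Finset.filter_image]
      have h1 : A.filter (fun w => (∀ j, j ≠ Fin.last k →
          (Fin.snoc w s : Fin (k+1) → Fin 4) j = x j))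
          = A.filter (· = Fin.init x) := by
        apply Finset.filter_congr
        intro w _
        simpa using pred_snoc_last x w s
      rw [h1, Finset.filter_eq']
      split_ifs <;> simp
    show (_ : Finset _).card = 2
    rw [Finset.filter_union, Finset.filter_union, Finset.filter_union, key, key, key, key]
    by_cases hc : Fin.init x ∈ M
    · rw [if_pos hc, if_pos hc, if_neg (by simpa using hc), if_neg (by simpa using hc)]
      rw [Finset.union_empty, Finset.union_empty]
      exact snoc_pair_card _ _ _ (by decide)
    · rw [if_neg hc, if_neg hc, if_pos (by simpa using hc), if_pos (by simpa using hc)]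
      rw [Finset.empty_union, Finset.empty_union]
      exact snoc_pair_card _ _ _ (by decide)
  | cast i =>
    have key : ∀ (A : Finset (Fin k → Fin 4)) (s : Fin 4),
        ((A.image (fun w => Fin.snoc w s)).filter
          (fun w => ∀ j, j ≠ Fin.castSucc i → w j = x j))
        = if s = x (Fin.last k) then
            (A.filter (fun w => ∀ j, j ≠ i → w j = x (Fin.castSucc j))).image
              (fun w => Fin.snoc w s)
          else ∅ := by
      intro A s
      rw [Finset.filter_image]
      split_ifs with h
      · congr 1
        apply Finset.filter_congr
        intro w _
        rw [pred_snoc]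
        simp [h]
      · have he : A.filter (fun a => ∀ j, j ≠ Fin.castSucc i →
            (Fin.snoc a s : Fin (k+1) → Fin 4) j = x j) = ∅ := by
          rw [Finset.filter_eq_empty_iff]
          intro w _
          rw [pred_snoc]
          tauto
        rw [he, Finset.image_empty]
    have hM2 : (M.filter (fun w => ∀ j, j ≠ i → w j = x (Fin.castSucc j))).card = 2 :=
      hM (fun j => x (Fin.castSucc j)) i
    have hMc2 : (Mᶜ.filter (fun w => ∀ j, j ≠ i → w j = x (Fin.castSucc j))).card = 2 :=
      compl_filter_card M (fun j => x (Fin.castSucc j)) i hM2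
    show (_ : Finset _).card = 2
    rw [Finset.filter_union, Finset.filter_union, Finset.filter_union, key, key, key, key]
    rcases (show ∀ a : Fin 4, a = 0 ∨ a = 1 ∨ a = 2 ∨ a = 3 by decide) (x (Fin.last k))
        with h | h | h | h <;>
      rw [h] <;>
      simp only [if_true, if_pos rfl, if_neg (show (0:Fin 4) ≠ 1 by decide),
        if_neg (show (0:Fin 4) ≠ 2 by decide), if_neg (show (0:Fin 4) ≠ 3 by decide),
        if_neg (show (1:Fin 4) ≠ 0 by decide), if_neg (show (1:Fin 4) ≠ 2 by decide),
        if_neg (show (1:Fin 4) ≠ 3 by decide), if_neg (show (2:Fin 4) ≠ 0 by decide),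
        if_neg (show (2:Fin 4) ≠ 1 by decide), if_neg (show (2:Fin 4) ≠ 3 by decide),
        if_neg (show (3:Fin 4) ≠ 0 by decide), if_neg (show (3:Fin 4) ≠ 1 by decide),
        if_neg (show (3:Fin 4) ≠ 2 by decide), Finset.union_empty, Finset.empty_union] <;>
      rw [Finset.card_image_of_injective _ (snoc_inj _)] <;>
      first
        | exact hM2
        | exact hMc2
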